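/- arXiv:math/0504289 — 6 statements merged into one kernel-verified Lean document; each statement's English description precedes it below -/
import Mathlib

section
/- (Mertens' First Theorem) For every real x ≥ 2, |∑_{p ≤ x} (ln p)/p − ln x| < 2, where the sum is over primes p ≤ x. -/
/-!
Legendre's formula gives `log n! = ∑_{p ≤ n} v_p(n!) log p` with `n/p - 1 < v_p(n!) ≤ n/(p-1)`.
Writing `S(n) = ∑_{p ≤ n} log p / p` and comparing with `n log n - n + 1 ≤ log n! ≤ n log n`
(the lower bound from Stirling's formula), one gets `n S(n) - θ(n) ≤ n log n` and
`n log n - n + 1 ≤ n S(n) + n ∑_{p ≤ n} log p / (p (p - 1))`.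
Chebyshev's bound `θ(n) ≤ n log 4` and `∑_p log p / (p (p - 1)) ≤ 1` (computed for `p ≤ 16`,
and telescoped against `(log k + 17/16) / k` beyond) turn these into
`log n - 2 + 1/n ≤ S(n) ≤ log n + log 4`. For `n = ⌊x⌋` we have `log n ≤ log x < log n + 1/n`.
-/

open Finset Real
open scoped Nat
open Nat (primesLE)

lemma log_add_one_sub_log_le {t : ℝ} (ht : 0 < t) : log (t + 1) - log t ≤ t⁻¹ := by
  rw [← log_div (by positivity) ht.ne']
  calc log ((t + 1) / t) ≤ (t + 1) / t - 1 := log_le_sub_one_of_pos (by positivity)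
    _ = t⁻¹ := by field_simp; ring

lemma log_lt_log_floor_add_inv {x : ℝ} (hx : 1 ≤ x) :
    log x < log ⌊x⌋₊ + (⌊x⌋₊ : ℝ)⁻¹ := by
  have hn : (0 : ℝ) < ⌊x⌋₊ := by exact_mod_cast Nat.floor_pos.mpr hx
  calc log x < log (⌊x⌋₊ + 1) := log_lt_log (by linarith) (Nat.lt_floor_add_one x)
    _ ≤ log ⌊x⌋₊ + (⌊x⌋₊ : ℝ)⁻¹ := by linarith [log_add_one_sub_log_le hn]

lemma log_le_div_mul_log_two_of_pow_le {p k m : ℕ} (hk : 0 < k) (h : p ^ k ≤ 2 ^ m) :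
    log p ≤ m / k * log 2 := by
  rcases p.eq_zero_or_pos with rfl | hp
  · rw [Nat.cast_zero, log_zero]
    positivity
  rw [div_mul_eq_mul_div, le_div_iff₀ (by exact_mod_cast hk), mul_comm, ← log_pow, ← log_pow]
  exact log_le_log (by positivity) (by exact_mod_cast h)

lemma log_factorial_le_mul_log (n : ℕ) : log n ! ≤ n * log n := by
  rw [← log_pow]
  exact log_le_log (by positivity) (mod_cast Nat.factorial_le_pow n)

lemma mul_log_sub_add_one_le_log_factorial {n : ℕ} (hn : 2 ≤ n) :
    n * log n - n + 1 ≤ log n ! := by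
  have hstirling := Stirling.le_log_factorial_stirling (n := n) (by omega)
  have h12 : 2 ≤ log 12 := by
    rw [le_log_iff_exp_le (by norm_num), show (2 : ℝ) = 1 + 1 by norm_num, exp_add]
    nlinarith [exp_one_lt_d9, exp_pos 1]
  have h2n : 12 ≤ 2 * π * n := by
    have : (2 : ℝ) ≤ n := by exact_mod_cast hn
    nlinarith [pi_gt_three]
  have hlog : 2 ≤ log n + log (2 * π) := by
    rw [← log_mul (by positivity) (by positivity)]
    exact h12.trans (log_le_log (by norm_num) (by linarith))
  linarith

lemma log_factorial_eq_sum_primesLE (n : ℕ) :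
    log n ! = ∑ p ∈ primesLE n, (n !).factorization p * log p := by
  rw [log_nat_eq_sum_factorization, Finsupp.sum_of_support_subset]
  · intro p hp
    rw [Nat.support_factorization] at hp
    have hprime := Nat.prime_of_mem_primeFactors hp
    exact Nat.mem_primesLE.mpr
      ⟨hprime.dvd_factorial.mp (Nat.dvd_of_mem_primeFactors hp), hprime⟩
  · simp

lemma div_sub_one_lt_factorization_factorial {p : ℕ} (hp : p.Prime) (n : ℕ) :
    (n : ℝ) / p - 1 < (n !).factorization p := by
  have hlegendre : n / p ≤ (n !).factorization p := by
    rw [Nat.factorization_factorial hp (b := n + 2) (by linarith [Nat.log_le_self p n])]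
    simpa using single_le_sum (f := fun i ↦ n / p ^ i) (fun _ _ ↦ Nat.zero_le _)
      (mem_Ico.mpr ⟨le_rfl, by omega⟩ : 1 ∈ Ico 1 (n + 2))
  calc (n : ℝ) / p - 1 < ⌊(n : ℝ) / p⌋₊ := Nat.sub_one_lt_floor _
    _ = (n / p : ℕ) := by rw [Nat.floor_div_eq_div]
    _ ≤ (n !).factorization p := by exact_mod_cast hlegendre

lemma factorization_factorial_le_div_sub_one {p : ℕ} (hp : p.Prime) (n : ℕ) :
    ((n !).factorization p : ℝ) ≤ n / (p - 1) :=
  calc ((n !).factorization p : ℝ) ≤ (n / (p - 1) : ℕ) :=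
        mod_cast Nat.factorization_factorial_le_div_pred hp n
    _ ≤ n / ((p - 1 : ℕ) : ℝ) := Nat.cast_div_le
    _ = n / (p - 1) := by rw [Nat.cast_sub hp.one_le, Nat.cast_one]

lemma mul_sum_log_div_sub_le_log_factorial (n : ℕ) :
    n * ∑ p ∈ primesLE n, log p / p - ∑ p ∈ primesLE n, log p ≤ log n ! := by
  rw [log_factorial_eq_sum_primesLE, mul_sum, ← sum_sub_distrib]
  refine sum_le_sum fun p hp ↦ ?_
  have hprime := Nat.prime_of_mem_primesLE hp
  have hp0 : (p : ℝ) ≠ 0 := by exact_mod_cast hprime.ne_zero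
  calc n * (log p / p) - log p = (n / p - 1) * log p := by field_simp
    _ ≤ (n !).factorization p * log p := by
      gcongr ?_ * _
      exact (div_sub_one_lt_factorization_factorial hprime n).le

lemma log_factorial_le_mul_sum (n : ℕ) :
    log n ! ≤ n * (∑ p ∈ primesLE n, log p / p + ∑ p ∈ primesLE n, log p / (p * (p - 1))) := by
  rw [log_factorial_eq_sum_primesLE, ← sum_add_distrib, mul_sum]
  refine sum_le_sum fun p hp ↦ ?_
  have hprime := Nat.prime_of_mem_primesLE hp
  have hp1 : (1 : ℝ) < p := by exact_mod_cast hprime.one_lt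
  calc (n !).factorization p * log p ≤ n / (p - 1) * log p := by
        gcongr ?_ * _
        exact factorization_factorial_le_div_sub_one hprime n
    _ = n * (log p / p + log p / (p * (p - 1))) := by
        field_simp [sub_ne_zero.mpr hp1.ne']
        ring

lemma log_div_mul_sub_one_nonneg (k : ℕ) : 0 ≤ log k / (k * (k - 1)) := by
  refine div_nonneg (log_natCast_nonneg k) ?_
  rcases k with _ | k
  · simp
  · push_cast
    rw [add_sub_cancel_right]
    positivity

lemma log_add_one_div_mul_le_sub {t c : ℝ} (ht : 0 < t) (hc : (t + 1) / t ≤ c) :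
    log (t + 1) / ((t + 1) * t) ≤ (log t + c) / t - (log (t + 1) + c) / (t + 1) := by
  have : (t + 1) * (log (t + 1) - log t) ≤ c :=
    calc (t + 1) * (log (t + 1) - log t) ≤ (t + 1) * t⁻¹ := by
          gcongr
          exact log_add_one_sub_log_le ht
      _ ≤ c := hc
  rw [div_sub_div _ _ ht.ne' (by positivity), mul_comm (t + 1) t,
    div_le_div_iff_of_pos_right (by positivity)]
  linarith

lemma sum_Ioc_log_div_mul_sub_one_le {N m : ℕ} (hN : 0 < N) (hNm : N ≤ m) {c : ℝ}
    (hc : ((N : ℝ) + 1) / N ≤ c) :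
    ∑ k ∈ Ioc N m, log k / (k * (k - 1)) ≤ (log N + c) / N - (log m + c) / m := by
  induction m, hNm using Nat.le_induction with
  | base => simp
  | succ m hNm ih =>
    have hm : (0 : ℝ) < m := by exact_mod_cast hN.trans_le hNm
    have hcm : ((m : ℝ) + 1) / m ≤ c := by
      refine le_trans ?_ hc
      rw [add_div, add_div, div_self hm.ne', div_self (by positivity)]
      gcongr
    have hstep := log_add_one_div_mul_le_sub hm hcm
    rw [sum_Ioc_succ_top (by omega)]
    push_cast
    rw [add_sub_cancel_right]
    linarith

lemma sum_primesLE_sixteen_log_div_mul_sub_one_add_le :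
    ∑ p ∈ primesLE 16, log p / (p * (p - 1)) + (log 16 + 17 / 16) / 16 ≤ 1 := by
  rw [show primesLE 16 = {2, 3, 5, 7, 11, 13} by decide]
  have h3 := log_le_div_mul_log_two_of_pow_le (p := 3) (k := 41) (m := 65) (by norm_num)
    (by norm_num)
  have h5 := log_le_div_mul_log_two_of_pow_le (p := 5) (k := 59) (m := 137) (by norm_num)
    (by norm_num)
  have h7 := log_le_div_mul_log_two_of_pow_le (p := 7) (k := 59) (m := 166) (by norm_num)
    (by norm_num)
  have h11 := log_le_div_mul_log_two_of_pow_le (p := 11) (k := 37) (m := 128) (by norm_num)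
    (by norm_num)
  have h13 := log_le_div_mul_log_two_of_pow_le (p := 13) (k := 27) (m := 100) (by norm_num)
    (by norm_num)
  have h16 : log 16 = 4 * log 2 := by
    rw [show (16 : ℝ) = 2 ^ 4 by norm_num, log_pow]
    norm_num
  norm_num [sum_insert] at h3 h5 h7 h11 h13 ⊢
  rw [h16]
  linarith [log_two_lt_d9]

lemma sum_primesLE_log_div_mul_sub_one_le_one (n : ℕ) :
    ∑ p ∈ primesLE n, log p / (p * (p - 1)) ≤ 1 := by
  obtain ⟨m, hnm, hm16⟩ : ∃ m, n ≤ m ∧ 16 ≤ m := ⟨max n 16, le_max_left _ _, le_max_right _ _⟩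
  have hsub : primesLE n ⊆ primesLE 16 ∪ Ioc 16 m := by
    intro p hp
    have := Nat.le_of_mem_primesLE hp
    by_cases h : p ≤ 16
    · exact mem_union_left _ (Nat.mem_primesLE.mpr ⟨h, Nat.prime_of_mem_primesLE hp⟩)
    · exact mem_union_right _ (mem_Ioc.mpr ⟨by omega, by omega⟩)
  have hdisj : Disjoint (primesLE 16) (Ioc 16 m) := by
    refine disjoint_left.mpr fun p hp hp' ↦ ?_
    have := Nat.le_of_mem_primesLE hp
    have := (mem_Ioc.mp hp').1
    omega
  have htail := sum_Ioc_log_div_mul_sub_one_le (c := 17 / 16) (by norm_num) hm16 (by norm_num)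
  have hm : (16 : ℝ) ≤ m := by exact_mod_cast hm16
  have hrest : 0 ≤ (log m + 17 / 16) / m := by
    have := log_nonneg (by linarith : (1 : ℝ) ≤ m)
    positivity
  calc ∑ p ∈ primesLE n, log p / (p * (p - 1))
      ≤ ∑ k ∈ primesLE 16 ∪ Ioc 16 m, log k / (k * (k - 1)) :=
        sum_le_sum_of_subset_of_nonneg hsub fun k _ _ ↦ log_div_mul_sub_one_nonneg k
    _ = ∑ p ∈ primesLE 16, log p / (p * (p - 1)) + ∑ k ∈ Ioc 16 m, log k / (k * (k - 1)) :=
        sum_union hdisj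
    _ ≤ 1 := by
        push_cast at htail
        linarith [sum_primesLE_sixteen_log_div_mul_sub_one_add_le]

lemma sum_primesLE_log_div_le {n : ℕ} (hn : 0 < n) :
    ∑ p ∈ primesLE n, log p / p ≤ log n + log 4 := by
  have hn' : (0 : ℝ) < n := by exact_mod_cast hn
  have htheta : ∑ p ∈ primesLE n, log p ≤ log 4 * n := by
    rw [← Chebyshev.theta_eq_sum_primesLE_log]
    exact Chebyshev.theta_le_log4_mul_x n.cast_nonneg
  have := (mul_sum_log_div_sub_le_log_factorial n).trans (log_factorial_le_mul_log n)
  rw [← mul_le_mul_iff_of_pos_left hn']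
  linarith

lemma log_sub_two_add_inv_le_sum_primesLE_log_div {n : ℕ} (hn : 2 ≤ n) :
    log n - 2 + (n : ℝ)⁻¹ ≤ ∑ p ∈ primesLE n, log p / p := by
  have hn' : (0 : ℝ) < n := by positivity
  have hfactorial := (mul_log_sub_add_one_le_log_factorial hn).trans (log_factorial_le_mul_sum n)
  have hC : n * ∑ p ∈ primesLE n, log p / (p * (p - 1)) ≤ n :=
    mul_le_of_le_one_right hn'.le (sum_primesLE_log_div_mul_sub_one_le_one n)
  rw [← mul_le_mul_iff_of_pos_left hn', mul_add, mul_inv_cancel₀ hn'.ne']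
  linarith

theorem mertens_first (x : ℝ) (hx : 2 ≤ x) :
    |∑ p ∈ (Finset.range (⌊x⌋₊ + 1)).filter Nat.Prime, Real.log p / p
      - Real.log x| < 2 := by
  have hn : 2 ≤ ⌊x⌋₊ := Nat.le_floor (by exact_mod_cast hx)
  have hlog4 : log 4 < 2 := by
    rw [show (4 : ℝ) = 2 ^ 2 by norm_num, log_pow]
    push_cast
    linarith [log_two_lt_d9]
  have hupper := sum_primesLE_log_div_le (n := ⌊x⌋₊) (by omega)
  have hlower := log_sub_two_add_inv_le_sum_primesLE_log_div hn
  have hfloor_le : log ⌊x⌋₊ ≤ log x := log_le_log (by positivity) (Nat.floor_le (by linarith))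
  have hlt_floor := log_lt_log_floor_add_inv (x := x) (by linarith)
  rw [← Nat.primesLE_eq_filter_range, abs_lt]
  constructor <;> linarith
end

section
/- For all real x > 1, the Chebyshev theta function satisfies θ(x) < 2x, where θ(x) = ∑_{p ≤ x} ln p. -/
/-- Chebyshev's first function `θ(x) = ∑_{p ≤ x} ln p`. -/
noncomputable def chebyshevTheta (x : ℝ) : ℝ :=
  ∑ p ∈ (Finset.range (⌊x⌋₊ + 1)).filter Nat.Prime, Real.log p

/-! Chebyshev's bound `θ x ≤ x log 4`, which comes from `∏_{p ≤ n} p ≤ 4 ^ n`, together with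
`log 4 < 2`. -/

open Real

theorem chebyshevTheta_eq_theta (x : ℝ) : chebyshevTheta x = Chebyshev.theta x := by
  rw [Chebyshev.theta_eq_sum_Icc, chebyshevTheta, Nat.range_succ_eq_Icc_zero]

theorem log_four_lt_two : log 4 < 2 := by
  have h : log 4 = 2 * log 2 := by
    rw [show (4 : ℝ) = 2 ^ 2 by norm_num, log_pow, Nat.cast_ofNat]
  linarith [log_two_lt_d9]

theorem chebyshevTheta_lt_two_mul (x : ℝ) (hx : 1 < x) :
    chebyshevTheta x < 2 * x := calc
  chebyshevTheta x = Chebyshev.theta x := chebyshevTheta_eq_theta x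
  _ ≤ log 4 * x := Chebyshev.theta_le_log4_mul_x (by linarith)
  _ < 2 * x := by gcongr; exact log_four_lt_two
end

section
/- For every real x ≥ 2, ln([x]!) = ∑_{j=1}^{[x]} ψ(x/j), where ψ(t) = ∑_{p^k ≤ t} ln p is Chebyshev's second function. -/
/-- Chebyshev's second function `ψ(t) = ∑_{p^k ≤ t} ln p = ∑_{n ≤ t} Λ(n)`. -/
noncomputable def chebyshevPsi (t : ℝ) : ℝ :=
  ∑ n ∈ Finset.range (⌊t⌋₊ + 1), ArithmeticFunction.vonMangoldt n

theorem log_floor_factorial_eq_sum_psi (x : ℝ) (hx : 2 ≤ x) :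
    Real.log (Nat.factorial ⌊x⌋₊) = ∑ j ∈ Finset.Icc 1 ⌊x⌋₊, chebyshevPsi (x / j) := by
  open Finset ArithmeticFunction in
  show _
  set N := ⌊x⌋₊ with hN
  -- rewrite each ψ(x/j) as a sum over Icc 1 (N / j)
  have hpsi : ∀ j ∈ Finset.Icc 1 N, chebyshevPsi (x / j)
      = ∑ n ∈ Finset.Icc 1 (N / j), Λ n := by
    intro j hj
    have hfl : ⌊x / (j : ℝ)⌋₊ = N / j := by rw [hN, Nat.floor_div_natCast]
    have hins : Finset.range (N / j + 1) = insert 0 (Finset.Icc 1 (N / j)) := by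
      ext n; simp [Nat.lt_succ_iff]; omega
    rw [chebyshevPsi, hfl, hins, Finset.sum_insert (by simp),
      ArithmeticFunction.map_zero, zero_add]
  rw [Finset.sum_congr rfl hpsi]
  -- rewrite log N! as a double sum over divisors
  have hprod : ∀ n : ℕ, ∏ m ∈ Finset.Icc 1 n, m = Nat.factorial n := by
    intro n
    induction n with
    | zero => simp
    | succ n ih => rw [Finset.prod_Icc_succ_top (by omega), ih, Nat.factorial_succ, mul_comm]
  have hfac : (Nat.factorial N : ℝ) = ∏ m ∈ Finset.Icc 1 N, (m : ℝ) := by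
    rw [← Nat.cast_prod, hprod]
  rw [hfac, Real.log_prod (by intro m hm; simp only [Finset.mem_Icc] at hm; exact Nat.cast_ne_zero.mpr (by omega))]
  have hlog : ∀ m ∈ Finset.Icc 1 N, Real.log (m : ℝ) = ∑ d ∈ m.divisors, Λ d := by
    intro m hm; rw [vonMangoldt_sum]
  rw [Finset.sum_congr rfl hlog]
  -- swap the order of summation via the bijection (m, d) ↦ (m / d, d)
  rw [Finset.sum_sigma', Finset.sum_sigma']
  refine Finset.sum_nbij' (fun p => ⟨p.1 / p.2, p.2⟩) (fun p => ⟨p.1 * p.2, p.2⟩)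
    ?_ ?_ ?_ ?_ ?_
  · rintro ⟨m, d⟩ hp
    simp only [Finset.mem_sigma, Finset.mem_Icc, Nat.mem_divisors] at hp ⊢
    obtain ⟨⟨hm1, hmN⟩, hdm, hm0⟩ := hp
    have hd0 : d ≠ 0 := fun h => hm0 (by simpa [h] using (hdm : d ∣ m))
    have hdle : d ∣ m := hdm
    have hq : m / d * d = m := Nat.div_mul_cancel hdle
    constructor
    · constructor
      · exact Nat.one_le_div_iff (Nat.pos_of_ne_zero hd0) |>.mpr (Nat.le_of_dvd (by omega) hdle)
      · exact le_trans (Nat.div_le_self _ _) hmN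
    · constructor
      · omega
      · have h1 : 1 ≤ m / d := Nat.one_le_div_iff (Nat.pos_of_ne_zero hd0) |>.mpr
          (Nat.le_of_dvd (by omega) hdle)
        rw [Nat.le_div_iff_mul_le h1, mul_comm, hq]; exact hmN
  · rintro ⟨j, n⟩ hp
    simp only [Finset.mem_sigma, Finset.mem_Icc, Nat.mem_divisors] at hp ⊢
    obtain ⟨⟨hj1, hjN⟩, hn1, hnj⟩ := hp
    have hjn : j * n ≤ N := by
      rw [mul_comm]; exact (Nat.le_div_iff_mul_le (by omega)).mp hnj
    exact ⟨⟨Nat.one_le_iff_ne_zero.mpr (Nat.mul_ne_zero (by omega) (by omega)), hjn⟩,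
      dvd_mul_left n j, Nat.mul_ne_zero (by omega) (by omega)⟩
  · rintro ⟨m, d⟩ hp
    simp only [Finset.mem_sigma, Finset.mem_Icc, Nat.mem_divisors] at hp
    obtain ⟨⟨hm1, hmN⟩, hdm, hm0⟩ := hp
    simp only [Sigma.mk.inj_iff, heq_eq_eq, and_true]
    exact Nat.div_mul_cancel hdm
  · rintro ⟨j, n⟩ hp
    simp only [Finset.mem_sigma, Finset.mem_Icc] at hp
    simp only [Sigma.mk.inj_iff, heq_eq_eq, and_true]
    exact Nat.mul_div_cancel _ (by omega)
  · rintro ⟨m, d⟩ _; rfl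
end

section
/- ∫_0^∞ (1/(e^x − 1) − 1/(x e^x)) dx = γ, where γ is the Euler–Mascheroni constant. -/
/-!
Put `φ(x) = 1/x - 1/(e^x - 1)` (`remainderKernel`), which lies in `[0, 1]` for `x > 0`.
Summing a geometric series in `u = e^{-x}` gives, for every `n`,
`1/(e^x - 1) - e^{-x}/x = ∑_{k=1}^{n} e^{-kx} - (e^{-x} - e^{-nx})/x - e^{-nx} φ(x)`.
Over `(0, ∞)` the sum integrates to the harmonic number `H_n`, the middle term to `log n` by
Frullani's integral, and the last term to something in `[0, 1/n]`. Hence the integral equals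
`H_n - log n + O(1/n)`, which tends to `γ`.
-/

open MeasureTheory Set Filter Topology Real

namespace EulerMascheroniIntegral

theorem div_one_sub_sub_div_eq_geom_sum {K : Type*} [Field K] {u x : K} (hu : u ≠ 1)
    (hx : x ≠ 0) (n : ℕ) :
    u / (1 - u) - u / x =
      ∑ k ∈ Finset.range n, u ^ (k + 1) - x⁻¹ * (u - u ^ n)
        - u ^ n * (1 / x - u / (1 - u)) := by
  have hu' : 1 - u ≠ 0 := sub_ne_zero.mpr hu.symm
  have hsum : ∑ k ∈ Finset.range n, u ^ (k + 1) = u * (1 - u ^ n) / (1 - u) := by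
    simp_rw [pow_succ', ← Finset.mul_sum, geom_sum_eq hu]
    field_simp
    ring
  rw [hsum]
  field_simp
  ring

theorem integral_exp_neg_mul_Ioi_zero {c : ℝ} (hc : 0 < c) :
    ∫ x in Ioi 0, exp (-(c * x)) = c⁻¹ := by
  simpa [neg_mul, neg_div] using integral_exp_mul_Ioi (neg_neg_of_pos hc) 0

theorem integrableOn_exp_neg_mul_Ioi {c : ℝ} (hc : 0 < c) (a : ℝ) :
    IntegrableOn (fun x => exp (-(c * x))) (Ioi a) := by
  simpa [neg_mul] using integrableOn_exp_mul_Ioi (neg_neg_of_pos hc) a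

theorem integral_frullani_exp_neg {c : ℝ} (hc : 0 < c)
    (hint : IntegrableOn (fun x => x⁻¹ * (exp (-x) - exp (-(c * x)))) (Ioi 0)) :
    ∫ x in Ioi 0, x⁻¹ * (exp (-x) - exp (-(c * x))) = log c := by
  have hcont : Continuous fun y : ℝ => exp (-y) := by fun_prop
  have hzero : Tendsto (fun y : ℝ => exp (-y)) (𝓝[>] 0) (𝓝 1) := by
    simpa using (hcont.tendsto 0).mono_left nhdsWithin_le_nhds
  simpa using Frullani.integral_Ioi_eq (hcont.locallyIntegrable.locallyIntegrableOn _) one_pos hc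
    hzero tendsto_exp_neg_atTop_nhds_zero (by simpa using hint)

noncomputable def remainderKernel (x : ℝ) : ℝ := 1 / x - 1 / (exp x - 1)

theorem remainderKernel_nonneg {x : ℝ} (hx : 0 < x) : 0 ≤ remainderKernel x := by
  have h : x ≤ exp x - 1 := by linarith [add_one_le_exp x]
  simpa [remainderKernel, sub_nonneg] using one_div_le_one_div_of_le hx h

theorem remainderKernel_le_one {x : ℝ} (hx : 0 < x) : remainderKernel x ≤ 1 := by
  have hE : 0 < exp x - 1 := by linarith [add_one_lt_exp hx.ne']
  have key : (1 - x) * exp x ≤ 1 :=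
    calc (1 - x) * exp x ≤ exp (-x) * exp x := by gcongr; linarith [add_one_le_exp (-x)]
      _ = 1 := by rw [← exp_add, neg_add_cancel, exp_zero]
  rw [remainderKernel, div_sub_div _ _ hx.ne' hE.ne', div_le_one (by positivity)]
  linarith

theorem one_div_exp_sub_one_sub_eq {x : ℝ} (hx : 0 < x) (n : ℕ) :
    1 / (exp x - 1) - 1 / (x * exp x)
      = ∑ k ∈ Finset.range n, exp (-((k + 1) * x)) - x⁻¹ * (exp (-x) - exp (-(n * x)))
        - exp (-(n * x)) * remainderKernel x := by
  have hpow (c : ℕ) : exp (-(c * x)) = exp (-x) ^ c := by rw [← exp_nat_mul]; ring_nf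
  have hu : exp (-x) ≠ 1 := by simpa using hx.ne'
  have hinv : 1 / (exp x - 1) = exp (-x) / (1 - exp (-x)) := by
    rw [exp_neg]; field_simp
  have hsum : ∑ k ∈ Finset.range n, exp (-((k + 1) * x))
      = ∑ k ∈ Finset.range n, exp (-x) ^ (k + 1) :=
    Finset.sum_congr rfl fun k _ => mod_cast hpow (k + 1)
  have hdiv : 1 / (x * exp x) = exp (-x) / x := by rw [exp_neg]; field_simp
  rw [remainderKernel, hinv, hdiv, hsum, hpow n]
  exact div_one_sub_sub_div_eq_geom_sum hu hx.ne' n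

theorem integrableOn_exp_neg_mul_remainderKernel {c : ℝ} (hc : 0 < c) :
    IntegrableOn (fun x => exp (-(c * x)) * remainderKernel x) (Ioi 0) := by
  refine (integrableOn_exp_neg_mul_Ioi hc 0).mono' (by unfold remainderKernel; fun_prop) ?_
  filter_upwards [ae_restrict_mem measurableSet_Ioi] with x hx
  rw [norm_of_nonneg (mul_nonneg (exp_pos _).le (remainderKernel_nonneg hx))]
  exact mul_le_of_le_one_right (exp_pos _).le (remainderKernel_le_one hx)

theorem integrableOn_one_div_exp_sub_one_sub :
    IntegrableOn (fun x => 1 / (exp x - 1) - 1 / (x * exp x)) (Ioi 0) := by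
  refine ((integrableOn_exp_neg_mul_Ioi one_pos 0).sub
    (integrableOn_exp_neg_mul_remainderKernel one_pos)).congr_fun (fun x hx => ?_)
    measurableSet_Ioi
  rw [one_div_exp_sub_one_sub_eq hx 1]
  simp

noncomputable def remainder (n : ℕ) : ℝ := ∫ x in Ioi 0, exp (-(n * x)) * remainderKernel x

theorem remainder_nonneg (n : ℕ) : 0 ≤ remainder n :=
  setIntegral_nonneg measurableSet_Ioi fun _ hx =>
    mul_nonneg (exp_pos _).le (remainderKernel_nonneg hx)

theorem remainder_le {n : ℕ} (hn : 0 < n) : remainder n ≤ (n : ℝ)⁻¹ := by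
  have hn' : (0 : ℝ) < n := Nat.cast_pos.mpr hn
  rw [← integral_exp_neg_mul_Ioi_zero hn']
  refine setIntegral_mono_on (integrableOn_exp_neg_mul_remainderKernel hn')
    (integrableOn_exp_neg_mul_Ioi hn' 0) measurableSet_Ioi fun x hx => ?_
  exact mul_le_of_le_one_right (exp_pos _).le (remainderKernel_le_one hx)

theorem tendsto_remainder_atTop : Tendsto remainder atTop (𝓝 0) := by
  refine tendsto_of_tendsto_of_tendsto_of_le_of_le' tendsto_const_nhds
    tendsto_inv_atTop_nhds_zero_nat (Eventually.of_forall remainder_nonneg) ?_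
  filter_upwards [eventually_gt_atTop 0] with n hn using remainder_le hn

theorem integral_one_div_exp_sub_one_sub_eq {n : ℕ} (hn : 0 < n) :
    ∫ x in Ioi 0, (1 / (exp x - 1) - 1 / (x * exp x)) = harmonic n - log n - remainder n := by
  have hn' : (0 : ℝ) < n := Nat.cast_pos.mpr hn
  have hexp (k : ℕ) : IntegrableOn (fun x => exp (-((k + 1) * x))) (Ioi 0) :=
    integrableOn_exp_neg_mul_Ioi k.cast_add_one_pos 0
  have hsum : IntegrableOn (fun x => ∑ k ∈ Finset.range n, exp (-((k + 1) * x))) (Ioi 0) :=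
    integrable_finsetSum (Finset.range n) fun k _ => hexp k
  have hrem := integrableOn_exp_neg_mul_remainderKernel hn'
  have hfrullani : IntegrableOn (fun x => x⁻¹ * (exp (-x) - exp (-(n * x)))) (Ioi 0) :=
    ((hsum.sub integrableOn_one_div_exp_sub_one_sub).sub hrem).congr_fun
      (fun x hx => by simp only [Pi.sub_apply, one_div_exp_sub_one_sub_eq hx n]; ring)
      measurableSet_Ioi
  rw [setIntegral_congr_fun measurableSet_Ioi fun x hx => one_div_exp_sub_one_sub_eq hx n,
    integral_sub ?_ hrem, integral_sub hsum hfrullani,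
    integral_finsetSum _ fun k _ => hexp k, integral_frullani_exp_neg hn' hfrullani, remainder]
  · simp [integral_exp_neg_mul_Ioi_zero (Nat.cast_add_one_pos _), harmonic]
  · exact hsum.sub hfrullani

end EulerMascheroniIntegral

open EulerMascheroniIntegral in
theorem integral_one_div_exp_sub_one_sub :
    ∫ x in Set.Ioi (0 : ℝ), (1 / (Real.exp x - 1) - 1 / (x * Real.exp x))
      = Real.eulerMascheroniConstant := by
  have hlim : Tendsto (fun n : ℕ => (harmonic n : ℝ) - log n - remainder n) atTop
      (𝓝 eulerMascheroniConstant) := by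
    simpa using tendsto_harmonic_sub_log.sub tendsto_remainder_atTop
  refine tendsto_nhds_unique tendsto_const_nhds (hlim.congr' ?_)
  filter_upwards [eventually_gt_atTop 0] with n hn
  exact (integral_one_div_exp_sub_one_sub_eq hn).symm
end

section
/- −γ = ∫_0^1 ln(ln(1/x)) dx, where γ is the Euler–Mascheroni constant. -/
open MeasureTheory Set Filter

lemma gammaInt : ∫ t in Set.Ioi (0:ℝ), Real.log t * Real.exp (-t) = -Real.eulerMascheroniConstant := by
  have h1 := Complex.hasDerivAt_GammaIntegral (s := 1) (by norm_num)
  have heq : Complex.Gamma =ᶠ[nhds (1:ℂ)] Complex.GammaIntegral := by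
    filter_upwards [IsOpen.mem_nhds (isOpen_lt continuous_const Complex.continuous_re)
      (by norm_num : (0:ℝ) < (1:ℂ).re)] with s hs
    exact Complex.Gamma_eq_integral hs
  have h2 : HasDerivAt Complex.Gamma
      (∫ t : ℝ in Set.Ioi 0, (t:ℂ) ^ ((1:ℂ) - 1) * (Real.log t * Real.exp (-t))) 1 :=
    h1.congr_of_eventuallyEq heq
  have h3 := Complex.hasDerivAt_Gamma_one
  have h4 := h2.unique h3
  have h5 : (∫ t : ℝ in Set.Ioi 0, (t:ℂ) ^ ((1:ℂ) - 1) * (Real.log t * Real.exp (-t)))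
      = ((∫ t in Set.Ioi (0:ℝ), Real.log t * Real.exp (-t) : ℝ) : ℂ) := by
    rw [show (∫ t : ℝ in Set.Ioi 0, (t:ℂ) ^ ((1:ℂ) - 1) * (Real.log t * Real.exp (-t)))
        = ∫ t in Set.Ioi (0:ℝ), ((Real.log t * Real.exp (-t) : ℝ) : ℂ) from
      setIntegral_congr_fun measurableSet_Ioi fun t ht => by simp]
    exact integral_ofReal
  rw [h5] at h4
  exact_mod_cast h4

theorem neg_gamma_eq_integral_log_log :
    -Real.eulerMascheroniConstant = ∫ x in (0 : ℝ)..1, Real.log (Real.log (1 / x)) := by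
  rw [← gammaInt]
  have hinj : InjOn (fun t : ℝ => Real.exp (-t)) (Ioi 0) := fun a _ b _ h => by
    simpa using Real.exp_injective h
  have himg : (fun t : ℝ => Real.exp (-t)) '' Ioi 0 = Ioo 0 1 := by
    ext x
    constructor
    · rintro ⟨t, ht, rfl⟩
      exact ⟨Real.exp_pos _, by rw [Real.exp_lt_one_iff]; simpa using ht⟩
    · rintro ⟨h0, h1⟩
      exact ⟨-Real.log x, by simpa using Real.log_neg h0 h1, by simp [Real.exp_log h0]⟩
  have key := integral_image_eq_integral_abs_deriv_smul measurableSet_Ioi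
    (f := fun t : ℝ => Real.exp (-t)) (f' := fun t : ℝ => -Real.exp (-t))
    (fun x _ => ((Real.hasDerivAt_exp (-x)).comp x (hasDerivAt_neg x)).hasDerivWithinAt.congr_deriv
      (by ring)) hinj (fun x => Real.log (Real.log (1 / x)))
  rw [himg] at key
  rw [intervalIntegral.integral_of_le zero_le_one, MeasureTheory.integral_Ioc_eq_integral_Ioo, key]
  refine setIntegral_congr_fun measurableSet_Ioi fun t ht => ?_
  have : (1:ℝ) / Real.exp (-t) = Real.exp t := by rw [Real.exp_neg]; simp
  simp [this, Real.log_exp, abs_of_pos (Real.exp_pos _), smul_eq_mul, mul_comm]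
end

section
/- Define H := ∑_{k=2}^∞ (1/k) ∑_{p prime} 1/p^k. Then H = −∑_{n=2}^∞ μ(n) ln(ζ(n))/n, i.e. H = (1/2)ln ζ(2) + (1/3)ln ζ(3) + (1/5)ln ζ(5) − (1/6)ln ζ(6) + ⋯, where μ is the Möbius function and ζ is the Riemann zeta function. -/
/-- Mertens' constant `H = ∑_{k ≥ 2} (1/k) ∑_p 1/p^k`. -/
noncomputable def mertensH : ℝ :=
  ∑' k : ℕ, (1 / ((k : ℝ) + 2)) * ∑' p : Nat.Primes, 1 / ((p : ℕ) : ℝ) ^ (k + 2)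

/-!
For `|x| < 1`, expanding `-log (1 - x ^ a) = ∑_b x ^ (a b) / b` and collecting the terms with
`a b = m` gives `∑_{a ≥ 1} μ(a)/a · (-log (1 - x ^ a)) = x`, since `∑_{d ∣ m} μ(d)` vanishes unless
`m = 1`. Splitting off `a = 1` turns this into `∑_{k ≥ 2} x^k/k = ∑_{a ≥ 2} μ(a)/a · log (1 - x ^ a)`.
Put `x = 1/p`, sum over the primes and exchange the two summations (everything is dominated by
`∑_{p, k} p^{-k-2}`); the Euler product turns `∑_p log (1 - p^{-a})` into `-log ζ(a)`.
-/

open Real ArithmeticFunction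
open scoped ArithmeticFunction.Moebius

theorem Real.hasSum_pow_div_neg_log {x : ℝ} (hx : |x| < 1) :
    HasSum (fun n : ℕ => x ^ n / n) (-log (1 - x)) := by
  rw [← hasSum_nat_add_iff' 1]
  simpa using hasSum_pow_div_log_of_abs_lt_one hx

theorem Real.hasSum_pow_add_two_div {x : ℝ} (hx : |x| < 1) :
    HasSum (fun n : ℕ => x ^ (n + 2) / ((n : ℝ) + 2)) (-log (1 - x) - x) := by
  simpa [Finset.sum_range_succ] using (hasSum_nat_add_iff' 2).mpr (hasSum_pow_div_neg_log hx)

theorem Real.abs_log_one_sub_le {x : ℝ} (hx : |x| ≤ 1 / 2) : |log (1 - x)| ≤ 2 * |x| := by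
  have h := abs_log_sub_add_sum_range_le (hx.trans_lt (by norm_num)) 0
  simp only [Finset.range_zero, Finset.sum_empty, zero_add, pow_one] at h
  refine h.trans ?_
  rw [div_le_iff₀ (by linarith)]
  nlinarith [abs_nonneg x]

theorem ArithmeticFunction.sum_divisors_moebius {R : Type*} [Ring R] (n : ℕ) :
    ∑ d ∈ n.divisors, (μ d : R) = if n = 1 then 1 else 0 := by
  rw [← one_apply, ← coe_moebius_mul_coe_zeta, coe_mul_zeta_apply]
  simp only [intCoe_apply]

/-- The terms with `a = 0` or `b = 0` vanish (`μ 0 = 0`, and division by `0` gives `0`), so the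
double series may run over all of `ℕ × ℕ`. -/
noncomputable def moebiusLogTerm (x : ℝ) (q : ℕ × ℕ) : ℝ :=
  μ q.1 * x ^ (q.1 * q.2) / (q.1 * q.2 : ℕ)

theorem abs_moebiusLogTerm_le {x : ℝ} (hx : |x| ≤ 1) (a b : ℕ) :
    |moebiusLogTerm x (a, b)| ≤ |x| ^ (a - 1) * |x| ^ (b - 1) := by
  rcases Nat.eq_zero_or_pos a with rfl | ha
  · simp [moebiusLogTerm]
  rcases Nat.eq_zero_or_pos b with rfl | hb
  · simp [moebiusLogTerm]
  have hμ : |(μ a : ℝ)| ≤ 1 := by exact_mod_cast abs_moebius_le_one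
  have hab : (1 : ℝ) ≤ (a * b : ℕ) := by
    exact_mod_cast Nat.one_le_iff_ne_zero.mpr (by positivity)
  calc |moebiusLogTerm x (a, b)| = |(μ a : ℝ)| * |x| ^ (a * b) / (a * b : ℕ) := by
        simp [moebiusLogTerm, abs_mul, abs_div, abs_pow]
    _ ≤ 1 * |x| ^ (a * b) / 1 := by gcongr
    _ ≤ |x| ^ (a - 1) * |x| ^ (b - 1) := by
        rw [one_mul, div_one, ← pow_add]
        exact pow_le_pow_of_le_one (abs_nonneg x) hx
          (by nlinarith [Nat.sub_add_cancel ha, Nat.sub_add_cancel hb])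

theorem summable_moebiusLogTerm {x : ℝ} (hx : |x| < 1) : Summable (moebiusLogTerm x) := by
  have hgeom : Summable (fun n : ℕ => |x| ^ (n - 1)) :=
    (summable_nat_add_iff 1).mp (by simpa using summable_geometric_of_lt_one (abs_nonneg x) hx)
  refine Summable.of_norm_bounded (hgeom.mul_of_nonneg hgeom (fun _ => by positivity)
    (fun _ => by positivity)) fun ⟨a, b⟩ => abs_moebiusLogTerm_le hx.le a b

theorem tsum_moebiusLogTerm_fiber (x : ℝ) (m : ℕ) :
    ∑' q : ((fun q : ℕ × ℕ => q.1 * q.2) ⁻¹' {m}), moebiusLogTerm x q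
      = if m = 1 then x else 0 := by
  rcases eq_or_ne m 0 with rfl | hm
  · refine (tsum_congr fun q => ?_).trans tsum_zero
    simp [moebiusLogTerm, show q.1.1 * q.1.2 = 0 from q.2]
  have hfiber : (fun q : ℕ × ℕ => q.1 * q.2) ⁻¹' {m} = ↑m.divisorsAntidiagonal := by
    ext q
    simp [Nat.mem_divisorsAntidiagonal, hm]
  rw [hfiber, Finset.tsum_subtype' m.divisorsAntidiagonal (moebiusLogTerm x)]
  calc ∑ q ∈ m.divisorsAntidiagonal, moebiusLogTerm x q
      = ∑ q ∈ m.divisorsAntidiagonal, (μ q.1 : ℝ) * (x ^ m / m) :=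
        Finset.sum_congr rfl fun q hq => by
          rw [moebiusLogTerm, (Nat.mem_divisorsAntidiagonal.mp hq).1, mul_div_assoc]
    _ = (if m = 1 then 1 else 0) * (x ^ m / m) := by
        rw [← Finset.sum_mul, Nat.sum_divisorsAntidiagonal (fun a _ => (μ a : ℝ)),
          sum_divisors_moebius]
    _ = if m = 1 then x else 0 := by split_ifs with h <;> simp [h]

theorem hasSum_moebiusLogTerm {x : ℝ} (hx : |x| < 1) : HasSum (moebiusLogTerm x) x := by
  have hS := (summable_moebiusLogTerm hx).hasSum
  have hfiber := hS.tsum_fiberwise (fun q => q.1 * q.2)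
  simp only [tsum_moebiusLogTerm_fiber] at hfiber
  rwa [hfiber.unique (hasSum_ite_eq 1 x)] at hS

theorem hasSum_moebiusLogTerm_row {x : ℝ} (hx : |x| < 1) (a : ℕ) :
    HasSum (fun b => moebiusLogTerm x (a, b)) (μ a / a * -log (1 - x ^ a)) := by
  rcases Nat.eq_zero_or_pos a with rfl | ha
  · simp [moebiusLogTerm]
  have hxa : |x ^ a| < 1 := by rw [abs_pow]; exact pow_lt_one₀ (abs_nonneg x) hx ha.ne'
  refine ((hasSum_pow_div_neg_log hxa).mul_left (μ a / a : ℝ)).congr_fun fun b => ?_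
  simp only [moebiusLogTerm, Nat.cast_mul, pow_mul]
  ring

theorem hasSum_moebius_div_mul_neg_log_one_sub_pow {x : ℝ} (hx : |x| < 1) :
    HasSum (fun a : ℕ => μ a / a * -log (1 - x ^ a)) x :=
  (hasSum_moebiusLogTerm hx).prod_fiberwise (hasSum_moebiusLogTerm_row hx)

theorem hasSum_moebius_div_mul_log_one_sub_pow_add_two {x : ℝ} (hx : |x| < 1) :
    HasSum (fun n : ℕ => μ (n + 2) / ((n : ℝ) + 2) * log (1 - x ^ (n + 2)))
      (-log (1 - x) - x) := by
  have h := ((hasSum_nat_add_iff' 2).mpr (hasSum_moebius_div_mul_neg_log_one_sub_pow hx)).neg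
  simpa [Finset.sum_range_succ, ← sub_eq_add_neg] using h

theorem tsum_pow_add_two_div_eq_tsum_moebius {x : ℝ} (hx : |x| < 1) :
    ∑' k : ℕ, x ^ (k + 2) / ((k : ℝ) + 2)
      = ∑' n : ℕ, μ (n + 2) / ((n : ℝ) + 2) * log (1 - x ^ (n + 2)) :=
  (hasSum_pow_add_two_div hx).tsum_eq.trans
    (hasSum_moebius_div_mul_log_one_sub_pow_add_two hx).tsum_eq.symm

theorem Nat.Primes.inv_le_half (p : Nat.Primes) : ((p : ℕ) : ℝ)⁻¹ ≤ 1 / 2 := by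
  rw [one_div]
  exact inv_anti₀ two_pos (by exact_mod_cast p.prop.two_le)

theorem Nat.Primes.summable_inv_pow {s : ℕ} (hs : 1 < s) :
    Summable (fun p : Nat.Primes => ((p : ℕ) : ℝ)⁻¹ ^ s) :=
  ((Real.summable_nat_pow_inv.mpr hs).comp_injective Nat.Primes.coe_nat_injective).congr
    fun _ => (inv_pow _ _).symm

theorem Nat.Primes.summable_inv_pow_add_two :
    Summable (fun x : ℕ × Nat.Primes => ((x.2 : ℕ) : ℝ)⁻¹ ^ (x.1 + 2)) := by
  refine Summable.of_nonneg_of_le (fun _ => by positivity) (fun ⟨k, p⟩ => ?_)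
    (summable_geometric_two.mul_of_nonneg (summable_inv_pow one_lt_two)
      (fun _ => by positivity) (fun _ => by positivity))
  rw [pow_add]
  gcongr
  exact p.inv_le_half

theorem summable_inv_prime_pow_add_two_div :
    Summable (fun x : ℕ × Nat.Primes => ((x.2 : ℕ) : ℝ)⁻¹ ^ (x.1 + 2) / ((x.1 : ℝ) + 2)) :=
  Nat.Primes.summable_inv_pow_add_two.of_nonneg_of_le (fun _ => by positivity)
    fun _ => div_le_self (by positivity) (by linarith)

theorem summable_moebius_div_mul_log_one_sub_inv_prime_pow :
    Summable (fun x : ℕ × Nat.Primes =>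
      (μ (x.1 + 2) : ℝ) / ((x.1 : ℝ) + 2) * log (1 - ((x.2 : ℕ) : ℝ)⁻¹ ^ (x.1 + 2))) := by
  refine (Nat.Primes.summable_inv_pow_add_two.mul_left 2).of_norm_bounded fun ⟨n, p⟩ => ?_
  set y := ((p : ℕ) : ℝ)⁻¹ ^ (n + 2)
  have hy : 0 ≤ y := by positivity
  have hμ : |(μ (n + 2) : ℝ)| / ((n : ℝ) + 2) ≤ 1 := by
    rw [div_le_one (by positivity)]
    exact (show |(μ (n + 2) : ℝ)| ≤ 1 by exact_mod_cast abs_moebius_le_one).trans (by linarith)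
  have hlog : |log (1 - y)| ≤ 2 * |y| := abs_log_one_sub_le <| by
    rw [abs_of_nonneg hy]
    exact (pow_le_of_le_one (by positivity) (p.inv_le_half.trans (by norm_num)) (by omega)).trans
      p.inv_le_half
  calc ‖(μ (n + 2) : ℝ) / ((n : ℝ) + 2) * log (1 - y)‖
      = |(μ (n + 2) : ℝ)| / ((n : ℝ) + 2) * |log (1 - y)| := by
        rw [Real.norm_eq_abs, abs_mul, abs_div, abs_of_pos (by positivity : (0 : ℝ) < n + 2)]
    _ ≤ 1 * (2 * |y|) := by gcongr
    _ = 2 * y := by rw [one_mul, abs_of_nonneg hy]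

theorem hasSum_log_one_sub_inv_prime_pow {s : ℕ} (hs : 1 < s) :
    HasSum (fun p : Nat.Primes => log (1 - ((p : ℕ) : ℝ)⁻¹ ^ s))
      (-log (∑' m : ℕ, 1 / (m : ℝ) ^ s)) := by
  let f : ℕ →*₀ ℝ := (powMonoidWithZeroHom (by omega : s ≠ 0)).comp
    (invMonoidWithZeroHom.comp (Nat.castRingHom ℝ).toMonoidWithZeroHom)
  have hf (m : ℕ) : f m = (m : ℝ)⁻¹ ^ s := rfl
  have hζ : ∑' m, f m = ∑' m : ℕ, 1 / (m : ℝ) ^ s :=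
    tsum_congr fun m => by rw [hf, inv_pow, one_div]
  have hf_summable : Summable (‖f ·‖) := by
    simpa [hf] using Real.summable_nat_pow_inv.mpr hs
  have hlt (p : Nat.Primes) : ((p : ℕ) : ℝ)⁻¹ ^ s < 1 :=
    pow_lt_one₀ (by positivity) (p.inv_le_half.trans_lt (by norm_num)) (by omega)
  have hsummable : Summable (fun p : Nat.Primes => log (1 - ((p : ℕ) : ℝ)⁻¹ ^ s)) := by
    simpa [sub_eq_add_neg] using
      Real.summable_log_one_add_of_summable (Nat.Primes.summable_inv_pow hs).neg
  have hprod := (Real.hasProd_of_hasSum_log (fun p => sub_pos.mpr (hlt p)) hsummable.hasSum).mul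
    (EulerProduct.eulerProduct_completely_multiplicative_hasProd hf_summable)
  -- The two products multiply to `∏ 1`, so `exp (∑_p log (1 - p^{-s})) = ζ(s)⁻¹`.
  have hone := hprod.unique
    (hasProd_one.congr_fun fun p => mul_inv_cancel₀ (sub_pos.mpr (hlt p)).ne')
  rw [← hζ, ← inv_eq_of_mul_eq_one_right hone, log_inv, log_exp, neg_neg]
  exact hsummable.hasSum

theorem mertensH_eq_moebius_series :
    mertensH = -∑' n : ℕ,
      (ArithmeticFunction.moebius (n + 2) : ℝ)
        * Real.log (∑' m : ℕ, 1 / ((m : ℝ) ^ (n + 2))) / ((n : ℝ) + 2) := by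
  calc mertensH
      = ∑' (k : ℕ) (p : Nat.Primes), ((p : ℕ) : ℝ)⁻¹ ^ (k + 2) / ((k : ℝ) + 2) :=
        tsum_congr fun k => by
          rw [← tsum_mul_left]
          exact tsum_congr fun p => by rw [inv_pow]; ring
    _ = ∑' (p : Nat.Primes) (k : ℕ), ((p : ℕ) : ℝ)⁻¹ ^ (k + 2) / ((k : ℝ) + 2) :=
        (summable_inv_prime_pow_add_two_div.tsum_comm
          (f := fun (k : ℕ) (p : Nat.Primes) => ((p : ℕ) : ℝ)⁻¹ ^ (k + 2) / ((k : ℝ) + 2))).symm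
    _ = ∑' (p : Nat.Primes) (n : ℕ),
          (μ (n + 2) : ℝ) / ((n : ℝ) + 2) * log (1 - ((p : ℕ) : ℝ)⁻¹ ^ (n + 2)) :=
        tsum_congr fun p => tsum_pow_add_two_div_eq_tsum_moebius <| by
          rw [abs_inv, Nat.abs_cast]
          exact inv_lt_one_of_one_lt₀ (by exact_mod_cast p.prop.one_lt)
    _ = ∑' (n : ℕ) (p : Nat.Primes),
          (μ (n + 2) : ℝ) / ((n : ℝ) + 2) * log (1 - ((p : ℕ) : ℝ)⁻¹ ^ (n + 2)) :=
        summable_moebius_div_mul_log_one_sub_inv_prime_pow.tsum_comm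
          (f := fun (n : ℕ) (p : Nat.Primes) =>
            (μ (n + 2) : ℝ) / ((n : ℝ) + 2) * log (1 - ((p : ℕ) : ℝ)⁻¹ ^ (n + 2)))
    _ = ∑' n : ℕ, (μ (n + 2) : ℝ) / ((n : ℝ) + 2) * -log (∑' m : ℕ, 1 / (m : ℝ) ^ (n + 2)) :=
        tsum_congr fun n => by
          rw [tsum_mul_left, (hasSum_log_one_sub_inv_prime_pow (by omega)).tsum_eq]
    _ = _ := by
        rw [← tsum_neg]
        exact tsum_congr fun n => by ring
end
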